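/- arXiv:1805.02363 — 8 statements merged into one kernel-verified Lean document; each statement's English description precedes it below -/
import Mathlib

section
/- Under a product availability distribution with probabilities ρ_k for actions k ∈ B, the expected maximum over the available set A of a function Q : B → ℝ, conditioned on A being nonempty only via a default last action with ρ = 1, equals ∑_{i=1}^m (∏_{j=1}^{i-1}(1−ρ_{(j)})) ρ_{(i)} Q(k_{(i)}), where k_{(1)},...,k_{(m)} are the actions sorted in descending order of Q-value. -/
open Finset

/-- Under a product availability distribution with the last action always available and
actions indexed in descending order of `Q`, the expected maximum of `Q` over the random
available set equals `∑ i (∏_{j<i}(1-ρ j)) ρ i Q i`. -/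
theorem stmt1 (m : ℕ) (hm : 0 < m) (ρ Q : Fin m → ℝ)
    (hρ0 : ∀ k, 0 ≤ ρ k) (hρ1 : ∀ k, ρ k ≤ 1)
    (hlast : ρ ⟨m - 1, Nat.sub_lt hm one_pos⟩ = 1)
    (hQdesc : ∀ i j : Fin m, i ≤ j → Q j ≤ Q i)
    (P : Finset (Fin m) → ℝ)
    (hP : ∀ A, P A = (∏ k ∈ A, ρ k) * ∏ k ∈ Aᶜ, (1 - ρ k)) :
    (∑ A : Finset (Fin m), P A * (if h : A.Nonempty then A.sup' h Q else 0))
      = ∑ i : Fin m,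
          (∏ j ∈ univ.filter (fun j => j < i), (1 - ρ j)) * ρ i * Q i := by
  classical
  have hPempty : P ∅ = 0 := by
    rw [hP]
    simp only [prod_empty, one_mul, compl_empty]
    apply Finset.prod_eq_zero (Finset.mem_univ ⟨m - 1, Nat.sub_lt hm one_pos⟩)
    rw [hlast]; ring
  have hsup : ∀ (A : Finset (Fin m)) (h : A.Nonempty), A.sup' h Q = Q (A.min' h) := by
    intro A h
    apply le_antisymm
    · exact Finset.sup'_le h Q fun k hk => hQdesc _ _ (Finset.min'_le A k hk)
    · exact Finset.le_sup' Q (Finset.min'_mem A h)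
  set key : Finset (Fin m) → Fin m := fun A =>
    if h : A.Nonempty then A.min' h else ⟨m - 1, Nat.sub_lt hm one_pos⟩ with hkey
  rw [← Finset.sum_fiberwise_of_maps_to (g := key) (t := univ)
      (fun A _ => Finset.mem_univ _)
      (fun A => P A * (if h : A.Nonempty then A.sup' h Q else 0))]
  apply Finset.sum_congr rfl
  intro i _
  -- each term in the fiber equals P A * Q i
  have hfib : ∑ A ∈ univ.filter (fun A => key A = i),
      P A * (if h : A.Nonempty then A.sup' h Q else 0)
      = ∑ A ∈ univ.filter (fun A => key A = i), P A * Q i := by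
    apply Finset.sum_congr rfl
    intro A hA
    rw [Finset.mem_filter] at hA
    by_cases h : A.Nonempty
    · rw [dif_pos h, hsup A h]
      have : A.min' h = i := by
        have h2 := hA.2
        simp only [hkey, dif_pos h] at h2
        exact h2
      rw [this]
    · have : A = ∅ := Finset.not_nonempty_iff_eq_empty.mp h
      subst this
      rw [hPempty]; ring
  rw [hfib, ← Finset.sum_mul]
  -- now compute the fiber probability
  have hS : ∑ A ∈ univ.filter (fun A => key A = i), P A
      = ∑ A ∈ univ.filter (fun A => i ∈ A ∧ ∀ j ∈ A, i ≤ j), P A := by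
    symm
    apply Finset.sum_subset
    · intro A hA
      rw [Finset.mem_filter] at hA ⊢
      obtain ⟨-, hiA, hall⟩ := hA
      have h : A.Nonempty := ⟨i, hiA⟩
      refine ⟨Finset.mem_univ _, ?_⟩
      rw [hkey]
      simp only [dif_pos h]
      exact le_antisymm (Finset.min'_le A i hiA) (Finset.le_min' A h i hall)
    · intro A hA hA'
      rw [Finset.mem_filter] at hA hA'
      by_cases h : A.Nonempty
      · exfalso
        apply hA'
        refine ⟨Finset.mem_univ _, ?_, ?_⟩
        · have h2 : A.min' h = i := by
            have h3 := hA.2; simp only [hkey, dif_pos h] at h3; exact h3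
          rw [← h2]; exact Finset.min'_mem A h
        · intro j hj
          have h2 : A.min' h = i := by
            have h3 := hA.2; simp only [hkey, dif_pos h] at h3; exact h3
          rw [← h2]; exact Finset.min'_le A j hj
      · rw [Finset.not_nonempty_iff_eq_empty.mp h, hPempty]
  rw [hS]
  -- bijection with subsets of Ioi i
  have hbij : ∑ A ∈ univ.filter (fun A => i ∈ A ∧ ∀ j ∈ A, i ≤ j), P A
      = ∑ B ∈ (Finset.Ioi i).powerset, P (insert i B) := by
    refine Finset.sum_bij' (fun A _ => A.erase i) (fun B _ => insert i B)
      ?_ ?_ ?_ ?_ ?_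
    · intro A hA
      rw [Finset.mem_filter] at hA
      rw [Finset.mem_powerset]
      intro k hk
      rw [Finset.mem_erase] at hk
      rw [Finset.mem_Ioi]
      exact lt_of_le_of_ne (hA.2.2 k hk.2) (Ne.symm hk.1)
    · intro B hB
      rw [Finset.mem_powerset] at hB
      rw [Finset.mem_filter]
      refine ⟨Finset.mem_univ _, Finset.mem_insert_self _ _, ?_⟩
      intro j hj
      rcases Finset.mem_insert.mp hj with h | h
      · exact le_of_eq h.symm
      · exact le_of_lt (Finset.mem_Ioi.mp (hB h))
    · intro A hA
      rw [Finset.mem_filter] at hA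
      exact Finset.insert_erase hA.2.1
    · intro B hB
      rw [Finset.mem_powerset] at hB
      apply Finset.erase_insert
      intro hi
      exact absurd (Finset.mem_Ioi.mp (hB hi)) (lt_irrefl i)
    · intro A hA
      rw [Finset.mem_filter] at hA
      rw [Finset.insert_erase hA.2.1]
  rw [hbij]
  -- compute P (insert i B) for B ⊆ Ioi i
  have hPB : ∀ B ∈ (Finset.Ioi i).powerset, P (insert i B)
      = (∏ j ∈ Finset.Iio i, (1 - ρ j)) * ρ i *
        ((∏ k ∈ B, ρ k) * ∏ k ∈ Finset.Ioi i \ B, (1 - ρ k)) := by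
    intro B hB
    rw [Finset.mem_powerset] at hB
    have hiB : i ∉ B := fun h => absurd (Finset.mem_Ioi.mp (hB h)) (lt_irrefl i)
    rw [hP, Finset.prod_insert hiB]
    have hcompl : (insert i B)ᶜ = Finset.Iio i ∪ (Finset.Ioi i \ B) := by
      ext k
      simp only [Finset.mem_compl, Finset.mem_insert, Finset.mem_union, Finset.mem_Iio,
        Finset.mem_sdiff, Finset.mem_Ioi, not_or]
      constructor
      · rintro ⟨hki, hkB⟩
        rcases lt_trichotomy k i with h | h | h
        · exact Or.inl h
        · exact absurd h hki
        · exact Or.inr ⟨h, hkB⟩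
      · rintro (h | ⟨h, hkB⟩)
        · exact ⟨ne_of_lt h, fun hk => absurd (Finset.mem_Ioi.mp (hB hk)) (not_lt_of_gt h)⟩
        · exact ⟨ne_of_gt h, hkB⟩
    have hdisj : Disjoint (Finset.Iio i) (Finset.Ioi i \ B) := by
      apply Finset.disjoint_left.mpr
      intro k hk hk'
      rw [Finset.mem_Iio] at hk
      rw [Finset.mem_sdiff, Finset.mem_Ioi] at hk'
      exact absurd hk'.1 (asymm hk)
    rw [hcompl, Finset.prod_union hdisj]
    ring
  rw [Finset.sum_congr rfl hPB, ← Finset.mul_sum]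
  have hone : ∑ B ∈ (Finset.Ioi i).powerset,
      ((∏ k ∈ B, ρ k) * ∏ k ∈ Finset.Ioi i \ B, (1 - ρ k)) = 1 := by
    rw [← Finset.prod_add]
    have : ∀ k ∈ Finset.Ioi i, ρ k + (1 - ρ k) = 1 := fun k _ => by ring
    rw [Finset.prod_congr rfl this, Finset.prod_const_one]
  rw [hone, mul_one]
  have hIio : univ.filter (fun j => j < i) = Finset.Iio i := by
    ext k; simp [Finset.mem_Iio]
  rw [hIio]
end

section
/- Let E be the action-expectation operator mapping V_e : S_e → ℝ to (E V_e)(s) = ∑_{A ⊆ B} P_s(A) V_e(s∘A). Then E ∘ T*_e = T*_c ∘ E, i.e., the compressed Bellman operator applied to the compressed value function equals the compression of the embedded Bellman backup. -/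
open Finset

/-- `E ∘ T*_e = T*_c ∘ E`: compressing the embedded Bellman backup by the
action-expectation operator `E` agrees with applying the compressed Bellman operator
to the compressed value function. -/
theorem stmt2 {S B : Type*} [Fintype S] [Fintype B] [DecidableEq B]
    (p : S → B → S → ℝ) (r : S → B → ℝ) (γ : ℝ) (hγ0 : 0 ≤ γ) (hγ1 : γ < 1)
    (P : S → Finset B → ℝ) (hP0 : ∀ s A, 0 ≤ P s A) (hPe : ∀ s, P s ∅ = 0)
    (hP1 : ∀ s, ∑ A : Finset B, P s A = 1)
    (Ve : S → Finset B → ℝ) :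
    ∀ s : S,
      -- E (T*_e Ve) (s)
      (∑ A : Finset B, P s A *
        (if h : A.Nonempty then
          A.sup' h (fun k => r s k + γ * ∑ s', ∑ A' : Finset B,
            p s k s' * P s' A' * Ve s' A')
        else 0))
      =
      -- T*_c (E Ve) (s)
      (∑ A : Finset B, P s A *
        (if h : A.Nonempty then
          A.sup' h (fun k => r s k + γ * ∑ s',
            p s k s' * (∑ A' : Finset B, P s' A' * Ve s' A'))
        else 0)) := by
  intro s
  refine Finset.sum_congr rfl fun A _ => ?_
  congr 1
  split
  · apply Finset.sup'_congr _ rfl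
    intro k _
    congr 1
    congr 1
    refine Finset.sum_congr rfl fun s' _ => ?_
    rw [Finset.mul_sum]
    exact Finset.sum_congr rfl fun A' _ => by ring
  · rfl
end

section
/- The compressed Bellman operator T*_c has a unique fixed point V*_c : S → ℝ, and V*_c = E V*_e where V*_e is the unique fixed point of the embedded Bellman operator and E is the action-expectation operator. -/
open Finset

/-- The compressed Bellman operator `T*_c` has a unique fixed point `V*_c`, and it equals
`E V*_e`, the action-expectation compression of the unique fixed point of the embedded
Bellman operator `T*_e`. -/
theorem stmt4 {S B : Type*} [Fintype S] [Nonempty S] [Fintype B] [DecidableEq B]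
    (p : S → B → S → ℝ) (r : S → B → ℝ) (γ : ℝ) (hγ0 : 0 ≤ γ) (hγ1 : γ < 1)
    (hp0 : ∀ s k s', 0 ≤ p s k s') (hp1 : ∀ s k, ∑ s', p s k s' = 1)
    (P : S → Finset B → ℝ) (hP0 : ∀ s A, 0 ≤ P s A) (hPe : ∀ s, P s ∅ = 0)
    (hP1 : ∀ s, ∑ A : Finset B, P s A = 1)
    (Te : (S → Finset B → ℝ) → (S → Finset B → ℝ))
    (hTe : ∀ W s A, Te W s A =
      if h : A.Nonempty then
        A.sup' h (fun k => r s k + γ * ∑ s', ∑ A' : Finset B,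
          p s k s' * P s' A' * W s' A')
      else 0)
    (Tc : (S → ℝ) → (S → ℝ))
    (hTc : ∀ V s, Tc V s = ∑ A : Finset B, P s A *
      (if h : A.Nonempty then
        A.sup' h (fun k => r s k + γ * ∑ s', p s k s' * V s')
      else 0))
    (Ve : S → Finset B → ℝ) (hVe : Te Ve = Ve)
    (hVeUniq : ∀ W, Te W = W → W = Ve) :
    (∃! Vc : S → ℝ, Tc Vc = Vc) ∧
    Tc (fun s => ∑ A : Finset B, P s A * Ve s A)
      = (fun s => ∑ A : Finset B, P s A * Ve s A) := by
  classical
  set Vc : S → ℝ := fun s => ∑ A : Finset B, P s A * Ve s A with hVcdef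
  have hfix : Tc Vc = Vc := by
    funext s
    rw [hTc]
    have hterm : ∀ A : Finset B,
        (if h : A.Nonempty then
          A.sup' h (fun k => r s k + γ * ∑ s', p s k s' * Vc s')
        else 0) = Te Ve s A := by
      intro A
      rw [hTe]
      by_cases h : A.Nonempty
      · simp only [dif_pos h]
        apply Finset.sup'_congr h rfl
        intro k _
        congr 1
        congr 1
        apply Finset.sum_congr rfl
        intro s' _
        simp [Vc, Finset.mul_sum, mul_assoc]
      · simp [h]
    calc (∑ A : Finset B, P s A *
          (if h : A.Nonempty then
            A.sup' h (fun k => r s k + γ * ∑ s', p s k s' * Vc s')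
          else 0))
        = ∑ A : Finset B, P s A * Te Ve s A := by
          apply Finset.sum_congr rfl; intro A _; rw [hterm A]
      _ = ∑ A : Finset B, P s A * Ve s A := by rw [hVe]
      _ = Vc s := rfl
  have huniq : ∀ V : S → ℝ, Tc V = V → V = Vc := by
    intro V hV
    set W : S → Finset B → ℝ := fun s A =>
      if h : A.Nonempty then
        A.sup' h (fun k => r s k + γ * ∑ s', p s k s' * V s')
      else 0 with hWdef
    have hPW : ∀ s', ∑ A' : Finset B, P s' A' * W s' A' = V s' := by
      intro s'
      have := congrFun hV s'
      rw [hTc] at this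
      exact this
    have hWfix : Te W = W := by
      funext s A
      rw [hTe]
      by_cases h : A.Nonempty
      · simp only [hWdef, dif_pos h]
        apply Finset.sup'_congr h rfl
        intro k _
        congr 1
        congr 1
        apply Finset.sum_congr rfl
        intro s' _
        rw [← hPW s', Finset.mul_sum]
        apply Finset.sum_congr rfl
        intro A' _
        ring
      · simp [hWdef, h]
    have hWVe : W = Ve := hVeUniq W hWfix
    funext s
    rw [← congrFun hV s, hTc]
    simp only [Vc]
    apply Finset.sum_congr rfl
    intro A _
    rw [← hWVe]
  exact ⟨⟨Vc, hfix, huniq⟩, hfix⟩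
end

section
/- For any SAS-MDP, there exists an optimal policy for the embedded MDP in decision-list form: there is a family of permutations {σ_s}_{s∈S} of B such that the policy taking, at each embedded state s∘A, the first action of σ_s contained in A, is optimal for the embedded MDP. -/
open Finset

/-- Every SAS-MDP has an optimal policy for the embedded MDP in decision-list form: there is
a family of permutations `σ s` of the base actions such that at each embedded state `s∘A`,
taking the first action of `σ s` contained in `A` attains the optimal value `V*_e(s∘A)`. -/
theorem stmt6 {S : Type*} [Fintype S] (m : ℕ)
    (p : S → Fin m → S → ℝ) (r : S → Fin m → ℝ) (γ : ℝ) (hγ0 : 0 ≤ γ) (hγ1 : γ < 1)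
    (hp0 : ∀ s k s', 0 ≤ p s k s') (hp1 : ∀ s k, ∑ s', p s k s' = 1)
    (P : S → Finset (Fin m) → ℝ) (hP0 : ∀ s A, 0 ≤ P s A) (hPe : ∀ s, P s ∅ = 0)
    (hP1 : ∀ s, ∑ A : Finset (Fin m), P s A = 1)
    (Ve : S → Finset (Fin m) → ℝ)
    (hVe : ∀ s (A : Finset (Fin m)) (h : A.Nonempty),
      Ve s A = A.sup' h (fun k => r s k + γ * ∑ s', ∑ A' : Finset (Fin m),
        p s k s' * P s' A' * Ve s' A')) :
    ∃ σ : S → Equiv.Perm (Fin m),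
      ∀ s (A : Finset (Fin m)), A.Nonempty →
        ∃ i : Fin m, σ s i ∈ A ∧ (∀ j, j < i → σ s j ∉ A) ∧
          r s (σ s i) + γ * ∑ s', ∑ A' : Finset (Fin m),
              p s (σ s i) s' * P s' A' * Ve s' A'
            = Ve s A := by
  set Q : S → Fin m → ℝ := fun s k => r s k + γ * ∑ s', ∑ A' : Finset (Fin m),
      p s k s' * P s' A' * Ve s' A' with hQ
  refine ⟨fun s => Tuple.sort (fun k => -(Q s k)), fun s A hA => ?_⟩
  set σ := Tuple.sort (fun k => -(Q s k)) with hσ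
  -- the set of indices mapping into A is nonempty
  have hne : (A.preimage σ (σ.injective.injOn)).Nonempty := by
    obtain ⟨k, hk⟩ := hA
    exact ⟨σ.symm k, by simp [hk]⟩
  set i := (A.preimage σ (σ.injective.injOn)).min' hne with hi
  have hiA : σ i ∈ A := by
    have := (A.preimage σ (σ.injective.injOn)).min'_mem hne
    simpa using this
  refine ⟨i, hiA, ?_, ?_⟩
  · intro j hj hjA
    have : i ≤ j := (A.preimage σ (σ.injective.injOn)).min'_le j (by simpa using hjA)
    exact absurd hj (not_lt.mpr this)
  · show Q s (σ i) = Ve s A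
    rw [hVe s A hA]
    refine le_antisymm (le_sup' (Q s) hiA) (sup'_le _ _ fun k hk => ?_)
    show Q s k ≤ Q s (σ i)
    have hkσ : σ (σ.symm k) = k := σ.apply_symm_apply k
    have hle : i ≤ σ.symm k :=
      (A.preimage σ (σ.injective.injOn)).min'_le _ (by simp [hkσ, hk])
    have := Tuple.monotone_sort (fun k => -(Q s k)) hle
    simp only [Function.comp_apply, hkσ, ← hσ] at this
    linarith
end

section
/- Given the optimal compressed value function V*_c, the function π(s∘A) = argmax_{k∈A} [r^k_s + γ ∑_{s'} p^k_{s,s'} V*_c(s')] is an optimal policy for the embedded MDP, and V*_e(s∘A) = max_{k∈A} [r^k_s + γ ∑_{s'} p^k_{s,s'} V*_c(s')]. -/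
open Finset

lemma stmt11_sup'_abs_sub_le {B : Type*} {A : Finset B} (h : A.Nonempty) (f g : B → ℝ) (c : ℝ)
    (hc : ∀ k ∈ A, |f k - g k| ≤ c) : |A.sup' h f - A.sup' h g| ≤ c := by
  rw [abs_sub_le_iff]
  constructor
  · rw [sub_le_iff_le_add]
    apply Finset.sup'_le
    intro k hk
    have h1 : f k - g k ≤ c := (abs_le.mp (hc k hk)).2
    have h2 := Finset.le_sup' g hk
    linarith
  · rw [sub_le_iff_le_add]
    apply Finset.sup'_le
    intro k hk
    have h1 : g k - f k ≤ c := by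
      have := hc k hk; rw [abs_sub_comm] at this; exact (abs_le.mp this).2
    have h2 := Finset.le_sup' f hk
    linarith

/-- Given the optimal compressed value function `V*_c`, at every embedded state `s∘A`:
(i) `V*_e(s∘A) = max_{k∈A} [r^k_s + γ ∑_{s'} p^k_{s,s'} V*_c(s')]`, and
(ii) any action maximizing `r^k_s + γ ∑ p^k_{s,s'} V*_c(s')` over `A` attains the optimal
embedded value, i.e. the greedy policy w.r.t. `V*_c` is optimal for the embedded MDP. -/
theorem stmt11 {S B : Type*} [Fintype S] [Nonempty S] [Fintype B] [DecidableEq B]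
    (p : S → B → S → ℝ) (r : S → B → ℝ) (γ : ℝ) (hγ0 : 0 ≤ γ) (hγ1 : γ < 1)
    (hp0 : ∀ s k s', 0 ≤ p s k s') (hp1 : ∀ s k, ∑ s', p s k s' = 1)
    (P : S → Finset B → ℝ) (hP0 : ∀ s A, 0 ≤ P s A) (hPe : ∀ s, P s ∅ = 0)
    (hP1 : ∀ s, ∑ A : Finset B, P s A = 1)
    (Vc : S → ℝ)
    (hVc : ∀ s, Vc s = ∑ A : Finset B, P s A *
      (if h : A.Nonempty then
        A.sup' h (fun k => r s k + γ * ∑ s', p s k s' * Vc s')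
      else 0))
    (Ve : S → Finset B → ℝ)
    (hVe : ∀ s (A : Finset B) (h : A.Nonempty),
      Ve s A = A.sup' h (fun k => r s k + γ * ∑ s', ∑ A' : Finset B,
        p s k s' * P s' A' * Ve s' A')) :
    ∀ s (A : Finset B) (hA : A.Nonempty),
      Ve s A = A.sup' hA (fun k => r s k + γ * ∑ s', p s k s' * Vc s') ∧
      ∀ k ∈ A,
        (∀ k' ∈ A, r s k' + γ * ∑ s', p s k' s' * Vc s'
                    ≤ r s k + γ * ∑ s', p s k s' * Vc s') →
        r s k + γ * ∑ s', ∑ A' : Finset B, p s k s' * P s' A' * Ve s' A' = Ve s A := by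
  set W : S → ℝ := fun s => ∑ A' : Finset B, P s A' * Ve s A' with hWdef
  -- rewrite hVe in terms of W
  have hsumW : ∀ s k, (∑ s', ∑ A' : Finset B, p s k s' * P s' A' * Ve s' A')
      = ∑ s', p s k s' * W s' := by
    intro s k
    refine Finset.sum_congr rfl fun s' _ => ?_
    simp [hWdef, Finset.mul_sum, mul_assoc]
  have hVe' : ∀ s (A : Finset B) (h : A.Nonempty),
      Ve s A = A.sup' h (fun k => r s k + γ * ∑ s', p s k s' * W s') := by
    intro s A h
    rw [hVe s A h]
    refine Finset.sup'_congr h rfl fun k _ => ?_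
    rw [hsumW]
  -- W satisfies the compressed fixed point equation
  have hW : ∀ s, W s = ∑ A : Finset B, P s A *
      (if h : A.Nonempty then
        A.sup' h (fun k => r s k + γ * ∑ s', p s k s' * W s') else 0) := by
    intro s
    refine Finset.sum_congr rfl fun A _ => ?_
    by_cases h : A.Nonempty
    · rw [dif_pos h, hVe' s A h]
    · rw [dif_neg h]
      rw [Finset.not_nonempty_iff_eq_empty] at h
      subst h
      rw [hPe]
      ring
  -- contraction argument: W = Vc
  obtain ⟨s₀⟩ := (inferInstance : Nonempty S)
  have huniv : (Finset.univ : Finset S).Nonempty := ⟨s₀, Finset.mem_univ s₀⟩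
  set M : ℝ := Finset.univ.sup' huniv (fun s => |W s - Vc s|) with hMdef
  have hMnn : 0 ≤ M :=
    le_trans (abs_nonneg _) (Finset.le_sup' (fun s => |W s - Vc s|) (Finset.mem_univ s₀))
  have hle : ∀ s, |W s - Vc s| ≤ M := fun s =>
    Finset.le_sup' (fun s => |W s - Vc s|) (Finset.mem_univ s)
  have hstep : ∀ s, |W s - Vc s| ≤ γ * M := by
    intro s
    rw [hW s, hVc s, ← Finset.sum_sub_distrib]
    calc |∑ A : Finset B, (P s A *
          (if h : A.Nonempty then
            A.sup' h (fun k => r s k + γ * ∑ s', p s k s' * W s') else 0) -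
          P s A *
          (if h : A.Nonempty then
            A.sup' h (fun k => r s k + γ * ∑ s', p s k s' * Vc s') else 0))|
        ≤ ∑ A : Finset B, |P s A *
          (if h : A.Nonempty then
            A.sup' h (fun k => r s k + γ * ∑ s', p s k s' * W s') else 0) -
          P s A *
          (if h : A.Nonempty then
            A.sup' h (fun k => r s k + γ * ∑ s', p s k s' * Vc s') else 0)| :=
          Finset.abs_sum_le_sum_abs _ _
      _ ≤ ∑ A : Finset B, P s A * (γ * M) := by
          refine Finset.sum_le_sum fun A _ => ?_
          rw [← mul_sub, abs_mul, abs_of_nonneg (hP0 s A)]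
          refine mul_le_mul_of_nonneg_left ?_ (hP0 s A)
          by_cases h : A.Nonempty
          · rw [dif_pos h, dif_pos h]
            refine stmt11_sup'_abs_sub_le h _ _ _ fun k _ => ?_
            have : (r s k + γ * ∑ s', p s k s' * W s') -
                (r s k + γ * ∑ s', p s k s' * Vc s')
                = γ * ∑ s', p s k s' * (W s' - Vc s') := by
              rw [Finset.mul_sum, Finset.mul_sum, Finset.mul_sum,
                add_sub_add_left_eq_sub, ← Finset.sum_sub_distrib]
              refine Finset.sum_congr rfl fun s' _ => ?_
              ring
            rw [this, abs_mul, abs_of_nonneg hγ0]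
            refine mul_le_mul_of_nonneg_left ?_ hγ0
            calc |∑ s', p s k s' * (W s' - Vc s')|
                ≤ ∑ s', |p s k s' * (W s' - Vc s')| := Finset.abs_sum_le_sum_abs _ _
              _ ≤ ∑ s', p s k s' * M := by
                  refine Finset.sum_le_sum fun s' _ => ?_
                  rw [abs_mul, abs_of_nonneg (hp0 s k s')]
                  exact mul_le_mul_of_nonneg_left (hle s') (hp0 s k s')
              _ = M := by rw [← Finset.sum_mul, hp1 s k, one_mul]
          · rw [dif_neg h, dif_neg h]
            simp [mul_nonneg hγ0 hMnn]
      _ = γ * M := by rw [← Finset.sum_mul, hP1 s, one_mul]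
  have hMle : M ≤ γ * M := by
    rw [hMdef]
    exact Finset.sup'_le huniv _ fun s _ => hstep s
  have hM0 : M = 0 := le_antisymm (by nlinarith) hMnn
  have hWVc : ∀ s, W s = Vc s := by
    intro s
    have h1 := hle s
    rw [hM0] at h1
    have := abs_nonneg (W s - Vc s)
    have : |W s - Vc s| = 0 := le_antisymm h1 this
    have := abs_eq_zero.mp this
    linarith
  intro s A hA
  have hVeVc : Ve s A = A.sup' hA (fun k => r s k + γ * ∑ s', p s k s' * Vc s') := by
    rw [hVe' s A hA]
    refine Finset.sup'_congr hA rfl fun k _ => ?_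
    congr 1
    congr 1
    exact Finset.sum_congr rfl fun s' _ => by rw [hWVc s']
  refine ⟨hVeVc, fun k hk hmax => ?_⟩
  have h1 : r s k + γ * ∑ s', ∑ A' : Finset B, p s k s' * P s' A' * Ve s' A'
      = r s k + γ * ∑ s', p s k s' * Vc s' := by
    rw [hsumW]
    congr 1
    congr 1
    exact Finset.sum_congr rfl fun s' _ => by rw [hWVc s']
  rw [h1, hVeVc]
  exact le_antisymm
    (Finset.le_sup' (fun k => r s k + γ * ∑ s', p s k s' * Vc s') hk)
    (Finset.sup'_le hA _ fun k' hk' => hmax k' hk')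
end

section
/- Under a product availability distribution where every action k ∈ B satisfies ρ^k_s ≥ q for some constant q > 0, for any decision-list policy μ, any state s, and any two distinct actions k₁, k₂ ∈ B, the probability (over the random available set A_s) that the optimal decision list μ* selects k₁ and μ selects k₂ at s is either 0 or at least q². -/
open Finset

/-- Under a product availability distribution with all availability probabilities in `[q,1]`,
the probability `η` that (the optimal decision list) `σ*` selects `k₁` and `σ` selects `k₂`
is either 0 or at least `ρ k₁ · ρ k₂ · ∏_{j∈J} (1−ρ j)` (≥ q² times the product of
complementary probabilities), where `J` is the set of actions (other than `k₁,k₂`) preceding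
`k₁` in `σ*` or preceding `k₂` in `σ`. -/
theorem stmt14 (m : ℕ) (q : ℝ) (hq : 0 < q)
    (ρ : Fin m → ℝ) (hρq : ∀ k, q ≤ ρ k) (hρ1 : ∀ k, ρ k ≤ 1)
    (P : Finset (Fin m) → ℝ)
    (hP : ∀ A, P A = (∏ k ∈ A, ρ k) * ∏ k ∈ Aᶜ, (1 - ρ k))
    (σstar σ : Equiv.Perm (Fin m)) (k₁ k₂ : Fin m) (hne : k₁ ≠ k₂)
    (η : ℝ)
    (hη : η = ∑ A : Finset (Fin m), P A *
      (if (k₁ ∈ A ∧ ∀ j, σstar.symm j < σstar.symm k₁ → j ∉ A) ∧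
          (k₂ ∈ A ∧ ∀ j, σ.symm j < σ.symm k₂ → j ∉ A) then 1 else 0)) :
    η = 0 ∨
    ρ k₁ * ρ k₂ *
      ∏ j ∈ univ.filter (fun j => (j ≠ k₁ ∧ j ≠ k₂) ∧
          (σstar.symm j < σstar.symm k₁ ∨ σ.symm j < σ.symm k₂)), (1 - ρ j)
      ≤ η := by
  classical
  have hρ0 : ∀ k, (0:ℝ) ≤ ρ k := fun k => le_trans hq.le (hρq k)
  have h1ρ0 : ∀ k, (0:ℝ) ≤ 1 - ρ k := fun k => by linarith [hρ1 k]
  have hPnn : ∀ A, 0 ≤ P A := by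
    intro A
    rw [hP]
    exact mul_nonneg (Finset.prod_nonneg fun k _ => hρ0 k)
      (Finset.prod_nonneg fun k _ => h1ρ0 k)
  by_cases h1 : σ.symm k₁ < σ.symm k₂
  · left
    rw [hη]
    apply Finset.sum_eq_zero
    intro A _
    rw [if_neg, mul_zero]
    rintro ⟨⟨hk1A, -⟩, ⟨-, hpre⟩⟩
    exact hpre k₁ h1 hk1A
  by_cases h2 : σstar.symm k₂ < σstar.symm k₁
  · left
    rw [hη]
    apply Finset.sum_eq_zero
    intro A _
    rw [if_neg, mul_zero]
    rintro ⟨⟨-, hpre⟩, ⟨hk2A, -⟩⟩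
    exact hpre k₂ h2 hk2A
  right
  set J : Finset (Fin m) := univ.filter (fun j => (j ≠ k₁ ∧ j ≠ k₂) ∧
      (σstar.symm j < σstar.symm k₁ ∨ σ.symm j < σ.symm k₂)) with hJ
  set T : Finset (Fin m) := (insert k₁ (insert k₂ J))ᶜ with hT
  -- basic membership facts
  have hk1J : k₁ ∉ J := by simp [hJ]
  have hk2J : k₂ ∉ J := by simp [hJ]
  have hk1T : k₁ ∉ T := by simp [hT]
  have hk2T : k₂ ∉ T := by simp [hT]
  have hJT : ∀ j, j ∈ J → j ∉ T := by
    intro j hj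
    simp [hT, Finset.mem_insert]
    tauto
  -- the map S ↦ {k₁,k₂} ∪ S
  set ι : Finset (Fin m) → Finset (Fin m) := fun S => insert k₁ (insert k₂ S) with hι
  have hinj : Set.InjOn ι (T.powerset : Finset (Finset (Fin m))) := by
    intro S hS S' hS' hSS
    rw [Finset.mem_coe, Finset.mem_powerset] at hS hS'
    ext j
    by_cases hj1 : j = k₁
    · subst hj1
      exact ⟨fun h => absurd (hS h) hk1T, fun h => absurd (hS' h) hk1T⟩
    by_cases hj2 : j = k₂
    · subst hj2
      exact ⟨fun h => absurd (hS h) hk2T, fun h => absurd (hS' h) hk2T⟩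
    · have := Finset.ext_iff.mp hSS j
      simp only [hι, Finset.mem_insert] at this
      tauto
  -- value of each term on ι S
  have hterm : ∀ S ∈ T.powerset,
      P (ι S) * (if (k₁ ∈ ι S ∧ ∀ j, σstar.symm j < σstar.symm k₁ → j ∉ ι S) ∧
          (k₂ ∈ ι S ∧ ∀ j, σ.symm j < σ.symm k₂ → j ∉ ι S) then 1 else 0)
        = (ρ k₁ * ρ k₂ * ∏ j ∈ J, (1 - ρ j)) *
          ((∏ j ∈ S, ρ j) * ∏ j ∈ T \ S, (1 - ρ j)) := by
    intro S hS
    rw [Finset.mem_powerset] at hS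
    have hk1S : k₁ ∉ S := fun h => hk1T (hS h)
    have hk2S : k₂ ∉ S := fun h => hk2T (hS h)
    have hJmem : ∀ j, j ∈ J → j ∉ ι S := by
      intro j hj
      have hj' := Finset.mem_filter.mp hj
      simp only [hι, Finset.mem_insert]
      push_neg
      exact ⟨hj'.2.1.1, hj'.2.1.2, fun h => hJT j hj (hS h)⟩
    have hcond : (k₁ ∈ ι S ∧ ∀ j, σstar.symm j < σstar.symm k₁ → j ∉ ι S) ∧
        (k₂ ∈ ι S ∧ ∀ j, σ.symm j < σ.symm k₂ → j ∉ ι S) := by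
      refine ⟨⟨Finset.mem_insert_self _ _, ?_⟩,
        ⟨Finset.mem_insert_of_mem (Finset.mem_insert_self _ _), ?_⟩⟩
      · intro j hj
        apply hJmem
        rw [hJ, Finset.mem_filter]
        refine ⟨Finset.mem_univ _, ⟨⟨?_, ?_⟩, Or.inl hj⟩⟩
        · rintro rfl; exact lt_irrefl _ hj
        · rintro rfl; exact h2 hj
      · intro j hj
        apply hJmem
        rw [hJ, Finset.mem_filter]
        refine ⟨Finset.mem_univ _, ⟨⟨?_, ?_⟩, Or.inr hj⟩⟩
        · rintro rfl; exact h1 hj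
        · rintro rfl; exact lt_irrefl _ hj
    rw [if_pos hcond, mul_one, hP]
    have hcompl : (ι S)ᶜ = J ∪ (T \ S) := by
      ext j
      simp only [hι, Finset.mem_compl, Finset.mem_insert, Finset.mem_union,
        Finset.mem_sdiff, hT, Finset.mem_compl, Finset.mem_insert]
      constructor
      · rintro h
        push_neg at h
        obtain ⟨hj1, hj2, hjS⟩ := h
        by_cases hjJ : j ∈ J
        · exact Or.inl hjJ
        · exact Or.inr ⟨by tauto, hjS⟩
      · rintro (hjJ | ⟨hjT, hjS⟩)
        · have hj' := Finset.mem_filter.mp hjJ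
          push_neg
          exact ⟨hj'.2.1.1, hj'.2.1.2, fun h => hJT j hjJ (hS h)⟩
        · push_neg at hjT ⊢
          exact ⟨hjT.1, hjT.2.1, hjS⟩
    have hdisj : Disjoint J (T \ S) :=
      Finset.disjoint_left.mpr (fun j hj hj' => hJT j hj (Finset.mem_sdiff.mp hj').1)
    rw [hcompl, Finset.prod_union hdisj, Finset.prod_insert (by
        simp only [Finset.mem_insert]; push_neg; exact ⟨hne, hk1S⟩),
      Finset.prod_insert hk2S]
    ring
  -- lower bound η by the sum over the image
  have hbound : (ρ k₁ * ρ k₂ * ∏ j ∈ J, (1 - ρ j)) ≤ η := by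
    rw [hη]
    calc (ρ k₁ * ρ k₂ * ∏ j ∈ J, (1 - ρ j))
        = (ρ k₁ * ρ k₂ * ∏ j ∈ J, (1 - ρ j)) *
          ∑ S ∈ T.powerset, (∏ j ∈ S, ρ j) * ∏ j ∈ T \ S, (1 - ρ j) := by
          rw [← Finset.prod_add]
          simp
      _ = ∑ S ∈ T.powerset, P (ι S) *
          (if (k₁ ∈ ι S ∧ ∀ j, σstar.symm j < σstar.symm k₁ → j ∉ ι S) ∧
              (k₂ ∈ ι S ∧ ∀ j, σ.symm j < σ.symm k₂ → j ∉ ι S) then 1 else 0) := by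
          rw [Finset.mul_sum]
          exact (Finset.sum_congr rfl hterm).symm
      _ = ∑ A ∈ (T.powerset).image ι, P A *
          (if (k₁ ∈ A ∧ ∀ j, σstar.symm j < σstar.symm k₁ → j ∉ A) ∧
              (k₂ ∈ A ∧ ∀ j, σ.symm j < σ.symm k₂ → j ∉ A) then 1 else 0) := by
          rw [Finset.sum_image (fun a ha b hb h => hinj ha hb h)]
      _ ≤ ∑ A : Finset (Fin m), P A *
          (if (k₁ ∈ A ∧ ∀ j, σstar.symm j < σstar.symm k₁ → j ∉ A) ∧
              (k₂ ∈ A ∧ ∀ j, σ.symm j < σ.symm k₂ → j ∉ A) then 1 else 0) := by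
          apply Finset.sum_le_sum_of_subset_of_nonneg (Finset.subset_univ _)
          intro A _ _
          exact mul_nonneg (hPnn A) (by positivity)
  exact hbound
end

section
/- For any value function V : S → ℝ and any state s, the nonlinear constraint v_s ≥ E_{A_s}[max_{k∈A_s} Q^V(s,k)] under a product availability distribution is equivalent to the family of linear constraints v_s ≥ ∑_{i=1}^m (∏_{j<i}(1−ρ_{σ(j)})) ρ_{σ(i)} Q^V(s,σ(i)) for all permutations σ of B, and the maximally violated constraint (the permutation maximizing the right-hand side) is obtained by sorting actions in descending order of Q^V(s,·). -/
open Finset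

namespace Stmt17Aux

variable {α : Type*} [DecidableEq α]

noncomputable def firstIn (f : α → ℝ) : List α → Finset α → ℝ
  | [], _ => 0
  | a :: t, A => if a ∈ A then f a else firstIn f t A

noncomputable def gsum (ρ f : α → ℝ) : List α → ℝ
  | [] => 0
  | a :: t => ρ a * f a + (1 - ρ a) * gsum ρ f t

lemma firstIn_empty (f : α → ℝ) : ∀ l : List α, firstIn f l ∅ = 0
  | [] => rfl
  | a :: t => by simp [firstIn, firstIn_empty f t]

lemma firstIn_mem (f : α → ℝ) : ∀ (l : List α) (A : Finset α), A.Nonempty →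
    (∀ x ∈ A, x ∈ l) → ∃ k ∈ A, firstIn f l A = f k
  | [], A, hA, hsub => by
      obtain ⟨x, hx⟩ := hA
      exact absurd (hsub x hx) (by simp)
  | a :: t, A, hA, hsub => by
      by_cases ha : a ∈ A
      · exact ⟨a, ha, by simp [firstIn, ha]⟩
      · have hsub' : ∀ x ∈ A, x ∈ t := by
          intro x hx
          rcases List.mem_cons.mp (hsub x hx) with h | h
          · exact absurd (h ▸ hx) ha
          · exact h
        obtain ⟨k, hk, hfk⟩ := firstIn_mem f t A hA hsub'
        exact ⟨k, hk, by simp [firstIn, ha, hfk]⟩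

lemma firstIn_eq_sup' (f : α → ℝ) : ∀ (l : List α), l.Pairwise (fun a b => f b ≤ f a) →
    ∀ (A : Finset α) (h : A.Nonempty), (∀ x ∈ A, x ∈ l) → firstIn f l A = A.sup' h f
  | [], _, A, hA, hsub => by
      obtain ⟨x, hx⟩ := hA
      exact absurd (hsub x hx) (by simp)
  | a :: t, hp, A, hA, hsub => by
      rw [List.pairwise_cons] at hp
      by_cases ha : a ∈ A
      · have h1 : A.sup' hA f ≤ f a := by
          apply Finset.sup'_le
          intro b hb
          rcases List.mem_cons.mp (hsub b hb) with h | h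
          · exact le_of_eq (by rw [h])
          · exact hp.1 b h
        have h2 : f a ≤ A.sup' hA f := Finset.le_sup' f ha
        simp [firstIn, ha, le_antisymm h1 h2]
      · have hsub' : ∀ x ∈ A, x ∈ t := by
          intro x hx
          rcases List.mem_cons.mp (hsub x hx) with h | h
          · exact absurd (h ▸ hx) ha
          · exact h
        simp [firstIn, ha, firstIn_eq_sup' f t hp.2 A hA hsub']

lemma sum_fin_eq_gsum (ρ f : α → ℝ) : ∀ (m : ℕ) (τ : Fin m → α),
    ∑ i : Fin m, (∏ j ∈ univ.filter (fun j => j < i), (1 - ρ (τ j))) * ρ (τ i) * f (τ i)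
      = gsum ρ f (List.ofFn τ)
  | 0, τ => by simp [gsum]
  | Nat.succ m, τ => by
      rw [List.ofFn_succ, gsum, Fin.sum_univ_succ]
      have h0 : (univ.filter (fun j : Fin (m + 1) => j < (0 : Fin (m+1)))) = ∅ := by
        apply Finset.filter_false_of_mem
        intro j _
        exact fun h => absurd h (Fin.not_lt_zero j)
      rw [h0]
      simp only [Finset.prod_empty, one_mul]
      congr 1
      have key : ∀ i : Fin m,
          (∏ j ∈ univ.filter (fun j : Fin (m+1) => j < i.succ), (1 - ρ (τ j)))
            = (1 - ρ (τ 0)) * ∏ j ∈ univ.filter (fun j : Fin m => j < i), (1 - ρ (τ j.succ)) := by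
        intro i
        rw [Finset.prod_filter, Finset.prod_filter, Fin.prod_univ_succ]
        rw [if_pos (Fin.succ_pos i)]
        congr 1
        apply Finset.prod_congr rfl
        intro j _
        congr 1
        simp [Fin.succ_lt_succ_iff]
      calc ∑ i : Fin m, (∏ j ∈ univ.filter (fun j : Fin (m+1) => j < i.succ), (1 - ρ (τ j)))
              * ρ (τ i.succ) * f (τ i.succ)
          = ∑ i : Fin m, (1 - ρ (τ 0)) *
              ((∏ j ∈ univ.filter (fun j : Fin m => j < i), (1 - ρ (τ j.succ)))
                * ρ (τ i.succ) * f (τ i.succ)) := by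
            apply Finset.sum_congr rfl
            intro i _
            rw [key i]; ring
        _ = (1 - ρ (τ 0)) * gsum ρ f (List.ofFn fun i => τ i.succ) := by
            rw [← Finset.mul_sum, sum_fin_eq_gsum ρ f m (fun i => τ i.succ)]

lemma sum_powerset_eq_gsum (ρ f : α → ℝ) : ∀ (l : List α), l.Nodup →
    ∑ A ∈ l.toFinset.powerset, ((∏ k ∈ A, ρ k) * ∏ k ∈ l.toFinset \ A, (1 - ρ k)) * firstIn f l A
      = gsum ρ f l
  | [], _ => by simp [firstIn, gsum]
  | a :: t, hnd => by
      rw [List.nodup_cons] at hnd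
      have ha : a ∉ t.toFinset := by simpa using hnd.1
      rw [List.toFinset_cons, Finset.sum_powerset_insert ha, gsum]
      have hfirst : ∑ A ∈ t.toFinset.powerset,
          ((∏ k ∈ A, ρ k) * ∏ k ∈ insert a t.toFinset \ A, (1 - ρ k)) * firstIn f (a :: t) A
          = (1 - ρ a) * gsum ρ f t := by
        rw [← sum_powerset_eq_gsum ρ f t hnd.2, Finset.mul_sum]
        apply Finset.sum_congr rfl
        intro A hA
        rw [Finset.mem_powerset] at hA
        have haA : a ∉ A := fun h => ha (hA h)
        have hsd : insert a t.toFinset \ A = insert a (t.toFinset \ A) := by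
          ext x
          simp only [Finset.mem_sdiff, Finset.mem_insert]
          constructor
          · rintro ⟨h | h, h2⟩
            · exact Or.inl h
            · exact Or.inr ⟨h, h2⟩
          · rintro (h | ⟨h1, h2⟩)
            · exact ⟨Or.inl h, h ▸ haA⟩
            · exact ⟨Or.inr h1, h2⟩
        have hans : a ∉ t.toFinset \ A := fun h => ha (Finset.mem_sdiff.mp h).1
        rw [hsd, Finset.prod_insert hans]
        simp only [firstIn, if_neg haA]
        ring
      have hsecond : ∑ A ∈ t.toFinset.powerset,
          ((∏ k ∈ insert a A, ρ k) * ∏ k ∈ insert a t.toFinset \ insert a A, (1 - ρ k))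
            * firstIn f (a :: t) (insert a A)
          = ρ a * f a := by
        have hone : ∑ A ∈ t.toFinset.powerset,
            (∏ k ∈ A, ρ k) * ∏ k ∈ t.toFinset \ A, (1 - ρ k) = 1 := by
          rw [← Finset.prod_add ρ (fun k => 1 - ρ k) t.toFinset]
          simp
        calc ∑ A ∈ t.toFinset.powerset,
              ((∏ k ∈ insert a A, ρ k) * ∏ k ∈ insert a t.toFinset \ insert a A, (1 - ρ k))
                * firstIn f (a :: t) (insert a A)
            = ∑ A ∈ t.toFinset.powerset,
              (ρ a * f a) * ((∏ k ∈ A, ρ k) * ∏ k ∈ t.toFinset \ A, (1 - ρ k)) := by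
              apply Finset.sum_congr rfl
              intro A hA
              rw [Finset.mem_powerset] at hA
              have haA : a ∉ A := fun h => ha (hA h)
              have hsd : insert a t.toFinset \ insert a A = t.toFinset \ A := by
                ext x
                simp only [Finset.mem_sdiff, Finset.mem_insert, not_or]
                constructor
                · rintro ⟨h | h, h2, h3⟩
                  · exact absurd h h2
                  · exact ⟨h, h3⟩
                · rintro ⟨h1, h2⟩
                  exact ⟨Or.inr h1, fun he => ha (he ▸ h1), h2⟩
              rw [hsd, Finset.prod_insert haA]
              simp only [firstIn, Finset.mem_insert_self, if_pos]
              ring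
          _ = ρ a * f a := by rw [← Finset.mul_sum, hone, mul_one]
      rw [hfirst, hsecond]
      ring

end Stmt17Aux

open Stmt17Aux in
/-- Under a product availability distribution: (i) the nonlinear constraint
`v ≥ E[max_{k∈A} Q(k)]` is equivalent to the family of linear constraints
`v ≥ ∑ᵢ (∏_{j<i}(1−ρ_{σ(j)})) ρ_{σ(i)} Q(σ(i))` over all permutations `σ`; equivalently,
every permutation's weighted sum is at most the expected max, and (ii) the maximum
(most violated constraint) is attained by any permutation sorting `Q` in descending
order. -/
theorem stmt17 (m : ℕ) (ρ : Fin m → ℝ) (hρ0 : ∀ k, 0 ≤ ρ k) (hρ1 : ∀ k, ρ k ≤ 1)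
    (hne : ∃ k, ρ k = 1)
    (Q : Fin m → ℝ)
    (P : Finset (Fin m) → ℝ)
    (hP : ∀ A, P A = (∏ k ∈ A, ρ k) * ∏ k ∈ Aᶜ, (1 - ρ k)) :
    (∀ σ : Equiv.Perm (Fin m),
      ∑ i : Fin m, (∏ j ∈ univ.filter (fun j => j < i), (1 - ρ (σ j))) * ρ (σ i) * Q (σ i)
        ≤ ∑ A : Finset (Fin m), P A * (if h : A.Nonempty then A.sup' h Q else 0)) ∧
    (∀ σ : Equiv.Perm (Fin m), (∀ i j : Fin m, i ≤ j → Q (σ j) ≤ Q (σ i)) →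
      ∑ i : Fin m, (∏ j ∈ univ.filter (fun j => j < i), (1 - ρ (σ j))) * ρ (σ i) * Q (σ i)
        = ∑ A : Finset (Fin m), P A * (if h : A.Nonempty then A.sup' h Q else 0)) ∧
    (∀ v : ℝ,
      ((∑ A : Finset (Fin m), P A * (if h : A.Nonempty then A.sup' h Q else 0)) ≤ v ↔
       ∀ σ : Equiv.Perm (Fin m),
         ∑ i : Fin m, (∏ j ∈ univ.filter (fun j => j < i), (1 - ρ (σ j))) * ρ (σ i) * Q (σ i)
           ≤ v)) := by
  -- `P` is nonnegative
  have hPnn : ∀ A : Finset (Fin m), 0 ≤ P A := by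
    intro A
    rw [hP]
    exact mul_nonneg (Finset.prod_nonneg fun k _ => hρ0 k)
      (Finset.prod_nonneg fun k _ => sub_nonneg.mpr (hρ1 k))
  -- key identity: the permutation sum equals `∑ A, P A * firstIn Q l A`
  have key : ∀ σ : Equiv.Perm (Fin m),
      ∑ i : Fin m, (∏ j ∈ univ.filter (fun j => j < i), (1 - ρ (σ j))) * ρ (σ i) * Q (σ i)
        = ∑ A : Finset (Fin m), P A * firstIn Q (List.ofFn fun i => σ i) A := by
    intro σ
    set l : List (Fin m) := List.ofFn fun i => σ i with hl
    have hnd : l.Nodup := List.nodup_ofFn.mpr σ.injective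
    have htf : l.toFinset = (univ : Finset (Fin m)) := by
      ext x
      simp only [hl, List.mem_toFinset, List.mem_ofFn, Finset.mem_univ, iff_true]
      exact ⟨σ.symm x, by simp⟩
    rw [sum_fin_eq_gsum ρ Q m (fun i => σ i), ← sum_powerset_eq_gsum ρ Q l hnd, htf,
      Finset.powerset_univ]
    apply Finset.sum_congr rfl
    intro A _
    rw [hP A, Finset.compl_eq_univ_sdiff]
  -- every element of `A` is in the list
  have hmeml : ∀ (σ : Equiv.Perm (Fin m)) (A : Finset (Fin m)), ∀ x ∈ A,
      x ∈ (List.ofFn fun i => σ i) := by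
    intro σ A x _
    simp only [List.mem_ofFn]
    exact ⟨σ.symm x, by simp⟩
  -- part 1
  have part1 : ∀ σ : Equiv.Perm (Fin m),
      ∑ i : Fin m, (∏ j ∈ univ.filter (fun j => j < i), (1 - ρ (σ j))) * ρ (σ i) * Q (σ i)
        ≤ ∑ A : Finset (Fin m), P A * (if h : A.Nonempty then A.sup' h Q else 0) := by
    intro σ
    rw [key σ]
    apply Finset.sum_le_sum
    intro A _
    apply mul_le_mul_of_nonneg_left _ (hPnn A)
    by_cases hA : A.Nonempty
    · rw [dif_pos hA]
      obtain ⟨k, hk, hfk⟩ := firstIn_mem Q (List.ofFn fun i => σ i) A hA (hmeml σ A)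
      rw [hfk]
      exact Finset.le_sup' Q hk
    · rw [dif_neg hA, Finset.not_nonempty_iff_eq_empty.mp hA, firstIn_empty]
  -- part 2
  have part2 : ∀ σ : Equiv.Perm (Fin m), (∀ i j : Fin m, i ≤ j → Q (σ j) ≤ Q (σ i)) →
      ∑ i : Fin m, (∏ j ∈ univ.filter (fun j => j < i), (1 - ρ (σ j))) * ρ (σ i) * Q (σ i)
        = ∑ A : Finset (Fin m), P A * (if h : A.Nonempty then A.sup' h Q else 0) := by
    intro σ hsort
    rw [key σ]
    apply Finset.sum_congr rfl
    intro A _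
    congr 1
    have hpw : (List.ofFn fun i => σ i).Pairwise (fun a b => Q b ≤ Q a) :=
      List.pairwise_ofFn.mpr (fun i j hij => hsort i j (le_of_lt hij))
    by_cases hA : A.Nonempty
    · rw [dif_pos hA, firstIn_eq_sup' Q _ hpw A hA (hmeml σ A)]
    · rw [dif_neg hA, Finset.not_nonempty_iff_eq_empty.mp hA, firstIn_empty]
  refine ⟨part1, part2, fun v => ⟨fun hv σ => le_trans (part1 σ) hv, fun hv => ?_⟩⟩
  -- choose a permutation sorting `Q` in descending order
  set σ₀ : Equiv.Perm (Fin m) := Tuple.sort (fun i => -Q i) with hσ₀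
  have hmono : Monotone ((fun i => -Q i) ∘ σ₀) := Tuple.monotone_sort (fun i => -Q i)
  have hsort : ∀ i j : Fin m, i ≤ j → Q (σ₀ j) ≤ Q (σ₀ i) := by
    intro i j hij
    have := hmono hij
    simpa using this
  rw [← part2 σ₀ hsort]
  exact hv σ₀
end

section
/- Policy iteration on the compressed MDP generates a sequence of decision-list policies whose value functions are monotonically non-decreasing, and it terminates with an optimal decision-list policy after finitely many iterations (at most the number of distinct decision-list policies, (m!)^n). -/
/-!
Under the product distribution, the value of a decision list is the expected Q-value of its
first available action; relabelling the actions along the list, this is `∑ A, P(A) q(min A)`,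
which is at most the compressed Bellman backup `∑ A, P(A) (max_{k ∈ A} q k)`, with equality when
the list is sorted by decreasing `q`. Hence `V i = T^{μ i} V i ≤ T V i = T^{μ (i+1)} V i`, and
the comparison principle for the monotone `γ`-contraction `T^{μ (i+1)}` (a maximum principle for
the difference) gives `V i ≤ V (i+1)`. Among the first `(m!)^n + 1` policies two coincide,
`μ a = μ b` with `a < b`; as `V a` and `V b` are then fixed points of the same policy operator
they are equal, so monotonicity forces `V (a+1) = V a`, which says that `V a = T V a`.
-/

open Finset

theorem Finset.sum_powerset_prod_mul_prod_sdiff_mul_min' {α R : Type*} [LinearOrder α]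
    [CommRing R] (ρ q : α → R) (s : Finset α) :
    ∑ B ∈ s.powerset, (∏ k ∈ B, ρ k) * (∏ k ∈ s \ B, (1 - ρ k)) *
        (if h : B.Nonempty then q (B.min' h) else 0)
      = ∑ a ∈ s, (∏ b ∈ s with b < a, (1 - ρ b)) * ρ a * q a := by
  induction s using Finset.induction_on_min with
  | empty => simp
  | insert a s ha ih =>
    have has : a ∉ s := fun h => (ha a h).false
    have hweights : ∑ B ∈ s.powerset, (∏ k ∈ B, ρ k) * ∏ k ∈ s \ B, (1 - ρ k) = 1 := by
      simp [← prod_add]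
    have hwithout : ∀ B ∈ s.powerset,
        (∏ k ∈ B, ρ k) * (∏ k ∈ insert a s \ B, (1 - ρ k)) *
          (if h : B.Nonempty then q (B.min' h) else 0)
        = (1 - ρ a) * ((∏ k ∈ B, ρ k) * (∏ k ∈ s \ B, (1 - ρ k)) *
          (if h : B.Nonempty then q (B.min' h) else 0)) := by
      intro B hB
      have haB : a ∉ B := fun h => has (mem_powerset.mp hB h)
      rw [insert_sdiff_of_notMem _ haB, prod_insert (by simp [has])]
      ring
    have hwith : ∀ B ∈ s.powerset,
        (∏ k ∈ insert a B, ρ k) * (∏ k ∈ insert a s \ insert a B, (1 - ρ k)) *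
          (if h : (insert a B).Nonempty then q ((insert a B).min' h) else 0)
        = ρ a * q a * ((∏ k ∈ B, ρ k) * ∏ k ∈ s \ B, (1 - ρ k)) := by
      intro B hB
      have hBs := mem_powerset.mp hB
      have hmin : (insert a B).min' (insert_nonempty a B) = a :=
        le_antisymm (min'_le _ _ (mem_insert_self a B)) <| le_min' _ _ _ fun x hx => by
          rcases mem_insert.mp hx with rfl | hx
          exacts [le_rfl, (ha x (hBs hx)).le]
      rw [insert_sdiff_insert, sdiff_insert_of_notMem has, prod_insert (fun h => has (hBs h)),
        dif_pos (insert_nonempty a B), hmin]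
      ring
    have hlater : ∑ x ∈ s, (∏ b ∈ insert a s with b < x, (1 - ρ b)) * ρ x * q x
        = (1 - ρ a) * ∑ x ∈ s, (∏ b ∈ s with b < x, (1 - ρ b)) * ρ x * q x := by
      rw [mul_sum]
      refine sum_congr rfl fun x hx => ?_
      rw [filter_insert, if_pos (ha x hx), prod_insert (by simp [has])]
      ring
    have hfirst : (insert a s).filter (· < a) = ∅ :=
      filter_false_of_mem (by simpa using fun x hx => (ha x hx).le)
    rw [sum_powerset_insert has, sum_congr rfl hwithout, sum_congr rfl hwith, ← mul_sum, ih,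
      ← mul_sum, hweights, sum_insert has, hfirst, hlater, prod_empty]
    ring

section DecisionList

variable {α β : Type*} [Fintype α]

/-- The probability that exactly the actions in `A` are available, each action `k` being
available independently with probability `ρ k`. -/
def availProb [DecidableEq α] (ρ : α → ℝ) (A : Finset α) : ℝ :=
  (∏ k ∈ A, ρ k) * ∏ k ∈ Aᶜ, (1 - ρ k)

def bestValue [DecidableEq α] (ρ q : α → ℝ) : ℝ :=
  ∑ A : Finset α, availProb ρ A * if h : A.Nonempty then A.sup' h q else 0

/-- The probability that `a` is the first available action of the decision list that ranks the
actions by the order of `α`. -/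
def firstProb [LinearOrder α] (ρ : α → ℝ) (a : α) : ℝ :=
  (∏ b ∈ univ with b < a, (1 - ρ b)) * ρ a

def listValue [LinearOrder α] (ρ q : α → ℝ) : ℝ :=
  ∑ a, firstProb ρ a * q a

theorem sum_availProb [DecidableEq α] (ρ : α → ℝ) : ∑ A, availProb ρ A = 1 := by
  simp [availProb, ← Fintype.prod_add]

theorem availProb_nonneg [DecidableEq α] {ρ : α → ℝ} (h0 : ∀ k, 0 ≤ ρ k) (h1 : ∀ k, ρ k ≤ 1)
    (A : Finset α) : 0 ≤ availProb ρ A :=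
  mul_nonneg (prod_nonneg fun k _ => h0 k) (prod_nonneg fun k _ => sub_nonneg.mpr (h1 k))

theorem bestValue_comp_equiv [Fintype β] [DecidableEq α] [DecidableEq β] (ρ q : α → ℝ)
    (e : β ≃ α) : bestValue (ρ ∘ e) (q ∘ e) = bestValue ρ q := by
  refine Fintype.sum_equiv e.finsetCongr _ _ fun B => ?_
  have hcompl : (B.map e.toEmbedding)ᶜ = Bᶜ.map e.toEmbedding := by
    ext x
    simp [mem_map_equiv]
  simp only [availProb, Equiv.finsetCongr_apply, hcompl, prod_map, map_nonempty, sup'_map]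
  rfl

theorem firstProb_nonneg [LinearOrder α] {ρ : α → ℝ} (h0 : ∀ k, 0 ≤ ρ k) (h1 : ∀ k, ρ k ≤ 1)
    (a : α) : 0 ≤ firstProb ρ a :=
  mul_nonneg (prod_nonneg fun k _ => sub_nonneg.mpr (h1 k)) (h0 a)

theorem sum_firstProb_le_one [LinearOrder α] {ρ : α → ℝ} (h1 : ∀ k, ρ k ≤ 1) :
    ∑ a, firstProb ρ a ≤ 1 := by
  have hnone : 0 ≤ ∏ k, (1 - ρ k) := prod_nonneg fun k _ => sub_nonneg.mpr (h1 k)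
  rw [prod_one_sub_ordered] at hnone
  simpa only [firstProb, mul_comm, sub_nonneg] using hnone

theorem listValue_eq_sum_availProb_mul_min' [LinearOrder α] (ρ q : α → ℝ) :
    listValue ρ q = ∑ A, availProb ρ A * if h : A.Nonempty then q (A.min' h) else 0 := by
  simpa only [listValue, firstProb, availProb, compl_eq_univ_sdiff, powerset_univ]
    using (sum_powerset_prod_mul_prod_sdiff_mul_min' ρ q univ).symm

theorem listValue_le_bestValue [LinearOrder α] {ρ : α → ℝ} (h0 : ∀ k, 0 ≤ ρ k)
    (h1 : ∀ k, ρ k ≤ 1) (q : α → ℝ) : listValue ρ q ≤ bestValue ρ q := by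
  rw [listValue_eq_sum_availProb_mul_min']
  refine sum_le_sum fun A _ => mul_le_mul_of_nonneg_left ?_ (availProb_nonneg h0 h1 A)
  split_ifs with h
  exacts [le_sup' q (min'_mem A h), le_rfl]

theorem listValue_eq_bestValue [LinearOrder α] (ρ : α → ℝ) {q : α → ℝ} (hq : Antitone q) :
    listValue ρ q = bestValue ρ q := by
  rw [listValue_eq_sum_availProb_mul_min']
  refine sum_congr rfl fun A _ => congrArg _ ?_
  split_ifs with h
  exacts [le_antisymm (le_sup' q (min'_mem A h)) (sup'_le _ _ fun k hk => hq (min'_le A k hk)),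
    rfl]

end DecisionList

theorem nonpos_of_le_mul_sum_mul {S : Type*} [Fintype S] {γ : ℝ} (hγ0 : 0 ≤ γ) (hγ1 : γ < 1)
    {K : S → S → ℝ} (hK0 : ∀ s s', 0 ≤ K s s') (hK1 : ∀ s, ∑ s', K s s' ≤ 1) {d : S → ℝ}
    (hd : ∀ s, d s ≤ γ * ∑ s', K s s' * d s') (s : S) : d s ≤ 0 := by
  by_contra! hs
  obtain ⟨s₀, -, hmax⟩ := exists_max_image univ d ⟨s, mem_univ s⟩
  have hpos : 0 < d s₀ := hs.trans_le (hmax s (mem_univ s))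
  have hmass : (∑ s', K s₀ s') * d s₀ ≤ d s₀ := mul_le_of_le_one_left hpos.le (hK1 s₀)
  have := calc
    d s₀ ≤ γ * ∑ s', K s₀ s' * d s' := hd s₀
    _ ≤ γ * ∑ s', K s₀ s' * d s₀ := by
      gcongr with s' _
      exacts [hK0 s₀ s', hmax s' (mem_univ s')]
    _ ≤ γ * d s₀ := by rw [← sum_mul]; gcongr
  nlinarith

section PolicyIteration

variable {S α : Type*} [Fintype S] [Fintype α] [LinearOrder α]
  (p : S → α → S → ℝ) (r : S → α → ℝ) (γ : ℝ) (ρ : S → α → ℝ)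

def qValue (W : S → ℝ) (s : S) (k : α) : ℝ :=
  r s k + γ * ∑ s', p s k s' * W s'

/-- The Bellman operator of the decision-list policy that ranks the actions at state `s` as
`σ s 0, σ s 1, …`. -/
def policyBellman (σ : S → Equiv.Perm α) (W : S → ℝ) (s : S) : ℝ :=
  listValue (ρ s ∘ σ s) (qValue p r γ W s ∘ σ s)

def policyKernel (σ : S → Equiv.Perm α) (s s' : S) : ℝ :=
  ∑ a, firstProb (ρ s ∘ σ s) a * p s (σ s a) s'

def bellman (W : S → ℝ) (s : S) : ℝ :=
  bestValue (ρ s) (qValue p r γ W s)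

variable {p r γ ρ}

theorem policyBellman_le_bellman (hρ0 : ∀ s k, 0 ≤ ρ s k) (hρ1 : ∀ s k, ρ s k ≤ 1)
    (σ : S → Equiv.Perm α) (W : S → ℝ) (s : S) :
    policyBellman p r γ ρ σ W s ≤ bellman p r γ ρ W s :=
  (listValue_le_bestValue (fun _ => hρ0 s _) (fun _ => hρ1 s _) _).trans_eq
    (bestValue_comp_equiv _ _ (σ s))

theorem policyBellman_eq_bellman {σ : S → Equiv.Perm α} {W : S → ℝ} {s : S}
    (hσ : Antitone (qValue p r γ W s ∘ σ s)) :
    policyBellman p r γ ρ σ W s = bellman p r γ ρ W s :=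
  (listValue_eq_bestValue _ hσ).trans (bestValue_comp_equiv _ _ (σ s))

theorem policyBellman_sub (σ : S → Equiv.Perm α) (W V : S → ℝ) (s : S) :
    policyBellman p r γ ρ σ W s - policyBellman p r γ ρ σ V s
      = γ * ∑ s', policyKernel p ρ σ s s' * (W s' - V s') := by
  simp only [policyBellman, policyKernel, listValue, qValue, Function.comp_apply,
    ← sum_sub_distrib, sum_mul, mul_sum]
  rw [sum_comm]
  refine sum_congr rfl fun a _ => ?_
  rw [← mul_sub, add_sub_add_left_eq_sub, ← sum_sub_distrib, mul_sum]
  exact sum_congr rfl fun _ _ => by ring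

theorem le_of_le_policyBellman (hγ0 : 0 ≤ γ) (hγ1 : γ < 1) (hp0 : ∀ s k s', 0 ≤ p s k s')
    (hp1 : ∀ s k, ∑ s', p s k s' = 1) (hρ0 : ∀ s k, 0 ≤ ρ s k) (hρ1 : ∀ s k, ρ s k ≤ 1)
    {σ : S → Equiv.Perm α} {W V : S → ℝ} (hW : ∀ s, W s ≤ policyBellman p r γ ρ σ W s)
    (hV : ∀ s, policyBellman p r γ ρ σ V s ≤ V s) (s : S) : W s ≤ V s := by
  refine sub_nonpos.mp (nonpos_of_le_mul_sum_mul (K := policyKernel p ρ σ)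
    (d := fun s => W s - V s) hγ0 hγ1 (fun s s' => ?_) (fun s => ?_) (fun s => ?_) s)
  · exact sum_nonneg fun a _ =>
      mul_nonneg (firstProb_nonneg (fun _ => hρ0 s _) (fun _ => hρ1 s _) a) (hp0 s _ s')
  · simp only [policyKernel]
    rw [sum_comm]
    simp only [← mul_sum, hp1, mul_one]
    exact sum_firstProb_le_one fun _ => hρ1 s _
  · rw [← policyBellman_sub]
    linarith [hW s, hV s]

end PolicyIteration

theorem Fintype.exists_lt_le_card_map_eq {β : Type*} [Fintype β] (f : ℕ → β) :
    ∃ a b, a < b ∧ b ≤ Fintype.card β ∧ f a = f b := by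
  obtain ⟨i, j, hij, hf⟩ :=
    Fintype.exists_ne_map_eq_of_card_lt (fun i : Fin (card β + 1) => f i) (by simp)
  rcases (Fin.val_injective.ne hij).lt_or_gt with h | h
  exacts [⟨i, j, h, Nat.lt_succ_iff.mp j.isLt, hf⟩, ⟨j, i, h, Nat.lt_succ_iff.mp i.isLt, hf.symm⟩]

theorem stmt19_general {S : Type*} [Fintype S] (m : ℕ)
    (p : S → Fin m → S → ℝ) (r : S → Fin m → ℝ) (γ : ℝ) (hγ0 : 0 ≤ γ) (hγ1 : γ < 1)
    (hp0 : ∀ s k s', 0 ≤ p s k s') (hp1 : ∀ s k, ∑ s', p s k s' = 1)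
    (ρ : S → Fin m → ℝ) (hρ0 : ∀ s k, 0 ≤ ρ s k) (hρ1 : ∀ s k, ρ s k ≤ 1)
    (μ : ℕ → S → Equiv.Perm (Fin m))
    (V : ℕ → S → ℝ)
    -- policy evaluation: `V i` is the value of the decision-list policy `μ i`
    (heval : ∀ i s, V i s = ∑ a : Fin m,
      (∏ b ∈ univ.filter (fun b => b < a), (1 - ρ s (μ i s b))) * ρ s (μ i s a) *
        (r s (μ i s a) + γ * ∑ s', p s (μ i s a) s' * V i s'))
    -- policy improvement: `μ (i+1)` sorts actions by descending Q-values w.r.t. `V i`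
    (hgreedy : ∀ i s (a b : Fin m), a ≤ b →
      r s (μ (i+1) s b) + γ * ∑ s', p s (μ (i+1) s b) s' * V i s'
        ≤ r s (μ (i+1) s a) + γ * ∑ s', p s (μ (i+1) s a) s' * V i s') :
    (∀ i s, V i s ≤ V (i+1) s) ∧
    (∃ i ≤ (Nat.factorial m) ^ (Fintype.card S),
      ∀ s, V i s = ∑ A : Finset (Fin m),
        ((∏ k ∈ A, ρ s k) * ∏ k ∈ Aᶜ, (1 - ρ s k)) *
        (if h : A.Nonempty then
          A.sup' h (fun k => r s k + γ * ∑ s', p s k s' * V i s')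
        else 0)) := by
  classical
  have hfix : ∀ i s, V i s = policyBellman p r γ ρ (μ i) (V i) s := heval
  have himprove : ∀ i s, policyBellman p r γ ρ (μ (i+1)) (V i) s = bellman p r γ ρ (V i) s :=
    fun i s => policyBellman_eq_bellman fun a b hab => hgreedy i s a b hab
  have hstep : ∀ i s, V i s ≤ V (i+1) s := fun i =>
    le_of_le_policyBellman hγ0 hγ1 hp0 hp1 hρ0 hρ1
      (fun s => (hfix i s).trans_le <| (policyBellman_le_bellman hρ0 hρ1 _ _ s).trans_eq
        (himprove i s).symm)
      (fun s => (hfix (i+1) s).ge)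
  refine ⟨hstep, ?_⟩
  obtain ⟨a, b, hab, hbN, hμ⟩ := Fintype.exists_lt_le_card_map_eq μ
  simp only [Fintype.card_fun, Fintype.card_perm, Fintype.card_fin] at hbN
  have hba : V b ≤ V a :=
    le_of_le_policyBellman hγ0 hγ1 hp0 hp1 hρ0 hρ1
      (fun s => (hfix b s).le.trans_eq (by rw [hμ])) (fun s => (hfix a s).ge)
  have hstable : V (a+1) = V a :=
    le_antisymm (((monotone_nat_of_le_succ hstep) hab).trans hba) (hstep a)
  refine ⟨a, by omega, fun s => ?_⟩
  calc V a s = policyBellman p r γ ρ (μ (a+1)) (V a) s := by rw [← hstable, ← hfix]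
    _ = _ := himprove a s

/-- Policy iteration on the compressed SAS-MDP under PDA (policy evaluation of
decision-list policies, greedy improvement by sorting Q-values) produces value functions
that are monotonically non-decreasing, and within `(m!)^n` iterations reaches an optimal
decision-list policy, i.e. one whose value function is a fixed point of the compressed
Bellman operator. -/
theorem stmt19 {S : Type*} [Fintype S] [Nonempty S] (m : ℕ) (hm : 0 < m)
    (p : S → Fin m → S → ℝ) (r : S → Fin m → ℝ) (γ : ℝ) (hγ0 : 0 ≤ γ) (hγ1 : γ < 1)
    (hp0 : ∀ s k s', 0 ≤ p s k s') (hp1 : ∀ s k, ∑ s', p s k s' = 1)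
    (ρ : S → Fin m → ℝ) (hρ0 : ∀ s k, 0 ≤ ρ s k) (hρ1 : ∀ s k, ρ s k ≤ 1)
    (hdefault : ∃ k₀ : Fin m, ∀ s, ρ s k₀ = 1)
    (μ : ℕ → S → Equiv.Perm (Fin m))
    (V : ℕ → S → ℝ)
    -- policy evaluation: `V i` is the value of the decision-list policy `μ i`
    (heval : ∀ i s, V i s = ∑ a : Fin m,
      (∏ b ∈ univ.filter (fun b => b < a), (1 - ρ s (μ i s b))) * ρ s (μ i s a) *
        (r s (μ i s a) + γ * ∑ s', p s (μ i s a) s' * V i s'))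
    -- policy improvement: `μ (i+1)` sorts actions by descending Q-values w.r.t. `V i`
    (hgreedy : ∀ i s (a b : Fin m), a ≤ b →
      r s (μ (i+1) s b) + γ * ∑ s', p s (μ (i+1) s b) s' * V i s'
        ≤ r s (μ (i+1) s a) + γ * ∑ s', p s (μ (i+1) s a) s' * V i s') :
    (∀ i s, V i s ≤ V (i+1) s) ∧
    (∃ i ≤ (Nat.factorial m) ^ (Fintype.card S),
      ∀ s, V i s = ∑ A : Finset (Fin m),
        ((∏ k ∈ A, ρ s k) * ∏ k ∈ Aᶜ, (1 - ρ s k)) *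
        (if h : A.Nonempty then
          A.sup' h (fun k => r s k + γ * ∑ s', p s k s' * V i s')
        else 0)) :=
  stmt19_general m p r γ hγ0 hγ1 hp0 hp1 ρ hρ0 hρ1 μ V heval hgreedy
end
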